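/- Let 𝒜 be a central, essential hyperplane arrangement in a finite-dimensional inner-product vector space V, and let S ⊆ Q(𝒜) be a building set with Q(S)=Q(𝒜). Then for every E ∈ Q(𝒜): (1) S^E is a building set for the restricted arrangement 𝒜^E = {H∩E : H∈𝒜, E⊄H} in E, and (2) S^{E^⊥}_E is a building set for the normal arrangement 𝒜_{V/E} (identifying V/E with E^⊥). -/

import Mathlib

open scoped Classical

noncomputable section

namespace CxArr

/-- `E ∈ Q(𝒜)`: `E` is a proper subspace obtained as an intersection of members of `𝒜`. -/
def QMem {M : Type*} [AddCommGroup M] [Module ℂ M]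
    (𝒜 : Finset (Submodule ℂ M)) (E : Submodule ℂ M) : Prop :=
  ∃ S : Finset (Submodule ℂ M), S ⊆ 𝒜 ∧ S.Nonempty ∧ E = S.inf id

/-- `S` is a building set for the arrangement `𝒜`: for every `E ∈ Q(𝒜)`, letting
`E₁, …, E_k` be the minimal elements of `S_E = {F ∈ S : E ⊆ F}`, one has `E = E₁ ∩ ⋯ ∩ E_k`
and the natural map is an isomorphism of arrangements `𝒜_{V/E} ≅ ⊕ᵢ 𝒜_{V/Eᵢ}`; the latter is
expressed by additivity of codimensions together with the fact that every hyperplane of `𝒜`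
containing `E` contains one of the `Eᵢ`. -/
def IsBuildingSet {M : Type*} [AddCommGroup M] [Module ℂ M] [FiniteDimensional ℂ M]
    (𝒜 S : Finset (Submodule ℂ M)) : Prop :=
  ∀ E : Submodule ℂ M, QMem 𝒜 E →
    (E = (S.filter (fun F => E ≤ F ∧ ∀ F' ∈ S, E ≤ F' → F' ≤ F → F' = F)).inf id) ∧
    (Module.finrank ℂ M - Module.finrank ℂ E =
      ∑ F ∈ S.filter (fun F => E ≤ F ∧ ∀ F' ∈ S, E ≤ F' → F' ≤ F → F' = F),
        (Module.finrank ℂ M - Module.finrank ℂ F)) ∧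
    (∀ H ∈ 𝒜, E ≤ H →
      ∃ F ∈ S.filter (fun F => E ≤ F ∧ ∀ F' ∈ S, E ≤ F' → F' ≤ F → F' = F), F ≤ H)

end CxArr

/-!
Fix a flat of the restricted (resp. normal) arrangement and let `G ∈ Q(𝒜)` be the flat of `𝒜`
it comes from: `G = E ∩ ⋂ T` (resp. `G = ⋂ T ⊇ E`). Everything is read off the set `M` of
minimal members of `S_G`.

For the normal arrangement, `B ↦ B ∩ E^⊥` is an order embedding of the subspaces containing `E`
that preserves codimension, so the three building-set conditions at `G` transfer verbatim; the
members of `M` are proper because `G` is, so none of them contains `E^⊥`.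

For the restriction, pass to orthogonal complements. The building-set conditions at `G` say that
`G^⊥ = ⊕_{F ∈ M} F^⊥`, and since every hyperplane containing `E ∈ Q(𝒜)` contains some `F ∈ M`,
also `E^⊥ = ⊕_{F ∈ M} (E^⊥ ∩ F^⊥)`. Compatibility of the two decompositions shows that the
`F ∈ M` with `E ⊄ F` have pairwise incomparable traces `F ∩ E`, that these traces are the
minimal members of `S^E` above `G`, and that `codim_E G = ∑_F codim_E (F ∩ E)`.
-/

namespace Finset

variable {ι α : Type*}

theorem supIndep_insert_iff [Lattice α] [OrderBot α] [IsModularLattice α] {s : Finset ι}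
    {f : ι → α} {a : ι} (ha : a ∉ s) :
    (insert a s).SupIndep f ↔ s.SupIndep f ∧ Disjoint (f a) (s.sup f) :=
  ⟨fun h => ⟨h.subset (subset_insert a s), h (subset_insert a s) (mem_insert_self a s) ha⟩,
    fun h => h.1.insert h.2⟩

theorem SupIndep.le_of_le_sup [Lattice α] [OrderBot α] [IsModularLattice α] {s : Finset ι}
    {W Y : ι → α} (hW : s.SupIndep W) (hYW : ∀ i ∈ s, Y i ≤ W i) {a : ι} (ha : a ∈ s) {X : α}
    (hXW : X ≤ W a) (hXY : X ≤ s.sup Y) : X ≤ Y a := by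
  have hdisj : Disjoint ((s.erase a).sup Y) (W a) :=
    ((hW (erase_subset a s) ha (notMem_erase a s)).mono_right
      (sup_mono_fun fun i hi => hYW i (mem_of_mem_erase hi))).symm
  have hsplit : s.sup Y = Y a ⊔ (s.erase a).sup Y := by rw [← sup_insert, insert_erase ha]
  calc X ≤ (Y a ⊔ (s.erase a).sup Y) ⊓ W a := le_inf (hsplit ▸ hXY) hXW
    _ = Y a := by rw [sup_inf_assoc_of_le _ (hYW a ha), hdisj.eq_bot, sup_bot_eq]

theorem inf_inf_filter_not_le [SemilatticeInf α] [OrderTop α] (a : α) (s : Finset α) :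
    a ⊓ s.inf id = a ⊓ (s.filter (¬ a ≤ ·)).inf id := by
  conv_lhs => rw [← filter_union_filter_not_eq (a ≤ ·) s, inf_union]
  have h : a ≤ (s.filter (a ≤ ·)).inf id := Finset.le_inf fun b hb => (mem_filter.1 hb).2
  rw [← inf_assoc, inf_eq_left.2 h]

end Finset

namespace Submodule

open Module

section Finrank

variable {ι K M : Type*} [DivisionRing K] [AddCommGroup M] [Module K M]

theorem finrank_comap_subtype (p q : Submodule K M) :
    finrank K (comap p.subtype q) = finrank K ↥(p ⊓ q) := by
  rw [← map_comap_subtype, finrank_map_subtype_eq]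

variable [FiniteDimensional K M]

theorem finrank_finset_sup_le_sum (T : Finset ι) (W : ι → Submodule K M) :
    finrank K ↥(T.sup W) ≤ ∑ i ∈ T, finrank K (W i) := by
  induction T using Finset.induction_on with
  | empty => simp
  | insert a s ha ih =>
    rw [Finset.sup_insert, Finset.sum_insert ha]
    exact (finrank_add_le_finrank_add_finrank _ _).trans (Nat.add_le_add_left ih _)

theorem finrank_finset_sup_eq_sum_iff {T : Finset ι} {W : ι → Submodule K M} :
    finrank K ↥(T.sup W) = ∑ i ∈ T, finrank K (W i) ↔ T.SupIndep W := by
  induction T using Finset.induction_on with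
  | empty => simp
  | insert a s ha ih =>
    have hdim := finrank_sup_add_finrank_inf_eq (W a) (s.sup W)
    have hle := finrank_finset_sup_le_sum s W
    rw [Finset.sup_insert, Finset.sum_insert ha, Finset.supIndep_insert_iff ha, ← ih,
      disjoint_iff, ← finrank_eq_zero]
    omega

end Finrank

theorem comap_subtype_le_comap_subtype_iff_of_le {R M : Type*} [Ring R] [AddCommGroup M]
    [Module R M] {p G B : Submodule R M} (hG : G ≤ p) :
    comap p.subtype G ≤ comap p.subtype B ↔ G ≤ B := by
  rw [comap_subtype_le_iff, inf_eq_right.2 hG, le_inf_iff]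
  exact and_iff_right hG

theorem finset_inf_image_comap {R M N : Type*} [Ring R] [AddCommGroup M] [Module R M]
    [AddCommGroup N] [Module R N] (f : M →ₗ[R] N) (T : Finset (Submodule R N)) :
    (T.image (comap f)).inf id = comap f (T.inf id) := by
  induction T using Finset.induction_on with
  | empty => simp
  | insert a s ha ih =>
    rw [Finset.image_insert, Finset.inf_insert, Finset.inf_insert, ih, comap_inf]
    rfl

section Orthogonal

variable {𝕜 E : Type*} [RCLike 𝕜] [NormedAddCommGroup E] [InnerProductSpace 𝕜 E]
  [FiniteDimensional 𝕜 E]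

theorem orthogonal_inf (K₁ K₂ : Submodule 𝕜 E) : (K₁ ⊓ K₂)ᗮ = K₁ᗮ ⊔ K₂ᗮ := by
  rw [← orthogonal_orthogonal (K₁ᗮ ⊔ K₂ᗮ), ← inf_orthogonal, orthogonal_orthogonal,
    orthogonal_orthogonal]

theorem orthogonal_finset_inf (T : Finset (Submodule 𝕜 E)) : (T.inf id)ᗮ = T.sup (·ᗮ) := by
  induction T using Finset.induction_on with
  | empty => simp
  | insert a s ha ih =>
    rw [Finset.inf_insert, Finset.sup_insert, orthogonal_inf, ih]
    rfl

theorem finrank_orthogonal_eq_sub (K : Submodule 𝕜 E) :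
    finrank 𝕜 Kᗮ = finrank 𝕜 E - finrank 𝕜 K := by
  have := finrank_add_finrank_orthogonal K
  omega

theorem finrank_sub_finrank_inf_eq_orthogonal (K₁ K₂ : Submodule 𝕜 E) :
    finrank 𝕜 K₁ - finrank 𝕜 ↥(K₁ ⊓ K₂) = finrank 𝕜 K₂ᗮ - finrank 𝕜 ↥(K₁ᗮ ⊓ K₂ᗮ) := by
  have h₁ := finrank_add_finrank_orthogonal K₁
  have h₂ := finrank_add_finrank_orthogonal (K₁ ⊓ K₂)
  have h₃ := finrank_sup_add_finrank_inf_eq K₁ᗮ K₂ᗮ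
  have h₄ : finrank 𝕜 ↥(K₁ ⊓ K₂) ≤ finrank 𝕜 K₁ := finrank_mono inf_le_left
  rw [orthogonal_inf] at h₂
  omega

theorem comap_orthogonal_subtype_le_iff {K B B' : Submodule 𝕜 E} (hB : K ≤ B) (hB' : K ≤ B') :
    comap Kᗮ.subtype B ≤ comap Kᗮ.subtype B' ↔ B ≤ B' := by
  rw [comap_subtype_le_iff]
  refine ⟨fun h => ?_, fun h => inf_le_inf_left _ h⟩
  rw [← sup_orthogonal_inf_of_hasOrthogonalProjection hB]
  exact sup_le hB' (h.trans inf_le_right)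

theorem finrank_orthogonal_sub_finrank_comap {K B : Submodule 𝕜 E} (hB : K ≤ B) :
    finrank 𝕜 Kᗮ - finrank 𝕜 (comap Kᗮ.subtype B) = finrank 𝕜 E - finrank 𝕜 B := by
  have h₁ := finrank_add_inf_finrank_orthogonal hB
  have h₂ := finrank_add_finrank_orthogonal K
  have h₃ := finrank_le B
  rw [finrank_comap_subtype]
  omega

end Orthogonal

end Submodule

namespace CxArr

open Module Submodule

section Minimal

variable {α β : Type*} [PartialOrder α] [PartialOrder β]

def minimalAbove (S : Finset α) (E : α) : Finset α :=
  S.filter (fun F => E ≤ F ∧ ∀ F' ∈ S, E ≤ F' → F' ≤ F → F' = F)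

theorem mem_minimalAbove {S : Finset α} {E F : α} :
    F ∈ minimalAbove S E ↔ F ∈ S ∧ E ≤ F ∧ ∀ F' ∈ S, E ≤ F' → F' ≤ F → F' = F :=
  Finset.mem_filter

theorem exists_mem_minimalAbove_le {S : Finset α} {E B : α} (hB : B ∈ S) (hEB : E ≤ B) :
    ∃ F ∈ minimalAbove S E, F ≤ B := by
  obtain ⟨F, hFB, hF, hmin⟩ :=
    (S.filter (E ≤ ·)).exists_le_minimal (Finset.mem_filter.2 ⟨hB, hEB⟩)
  rw [Finset.mem_filter] at hF
  refine ⟨F, mem_minimalAbove.2 ⟨hF.1, hF.2, fun F' hF' hEF' hF'F => ?_⟩, hFB⟩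
  exact le_antisymm hF'F (hmin (Finset.mem_filter.2 ⟨hF', hEF'⟩) hF'F)

theorem minimalAbove_image_filter {S : Finset α} {G : α} {E' : β} {f : α → β}
    (hf : Monotone f) {P : α → Prop} [DecidablePred P] [DecidableEq β]
    (hkey : ∀ B ∈ S, P B → (E' ≤ f B ↔ G ≤ B))
    (hP : ∀ B ∈ S, P B → ∀ F ∈ minimalAbove S G, F ≤ B → P F)
    (hinj : ∀ F ∈ minimalAbove S G, P F → ∀ F' ∈ minimalAbove S G, P F' → f F' ≤ f F → F' = F) :
    minimalAbove ((S.filter P).image f) E' = ((minimalAbove S G).filter P).image f := by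
  have below : ∀ B ∈ S, P B → E' ≤ f B → ∃ F ∈ minimalAbove S G, P F ∧ F ≤ B :=
    fun B hB hPB hE'B => by
      obtain ⟨F, hF, hFB⟩ := exists_mem_minimalAbove_le hB ((hkey B hB hPB).1 hE'B)
      exact ⟨F, hF, hP B hB hPB F hF hFB, hFB⟩
  have mem_image : ∀ F ∈ minimalAbove S G, P F → f F ∈ (S.filter P).image f ∧ E' ≤ f F :=
    fun F hF hPF => by
      obtain ⟨hFS, hGF, -⟩ := mem_minimalAbove.1 hF
      exact ⟨Finset.mem_image_of_mem f (Finset.mem_filter.2 ⟨hFS, hPF⟩), (hkey F hFS hPF).2 hGF⟩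
  ext X
  rw [mem_minimalAbove]
  constructor
  · rintro ⟨hX, hE'X, hmin⟩
    obtain ⟨B, hB, rfl⟩ := Finset.mem_image.1 hX
    obtain ⟨hBS, hPB⟩ := Finset.mem_filter.1 hB
    obtain ⟨F, hF, hPF, hFB⟩ := below B hBS hPB hE'X
    obtain ⟨hFS', hE'F⟩ := mem_image F hF hPF
    exact Finset.mem_image.2 ⟨F, Finset.mem_filter.2 ⟨hF, hPF⟩, hmin _ hFS' hE'F (hf hFB)⟩
  · intro hX
    obtain ⟨F, hF', rfl⟩ := Finset.mem_image.1 hX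
    obtain ⟨hF, hPF⟩ := Finset.mem_filter.1 hF'
    obtain ⟨hFS', hE'F⟩ := mem_image F hF hPF
    refine ⟨hFS', hE'F, fun X hX hE'X hXF => ?_⟩
    obtain ⟨B, hB, rfl⟩ := Finset.mem_image.1 hX
    obtain ⟨hBS, hPB⟩ := Finset.mem_filter.1 hB
    obtain ⟨F', hF', hPF', hF'B⟩ := below B hBS hPB hE'X
    have hF'F := hinj F hF hPF F' hF' hPF' ((hf hF'B).trans hXF)
    exact le_antisymm hXF (hF'F ▸ hf hF'B)

theorem ne_top_of_mem_minimalAbove {α : Type*} [SemilatticeInf α] [OrderTop α] {S : Finset α}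
    {G F : α} (hG : G = (minimalAbove S G).inf id) (hGtop : G ≠ ⊤)
    (hF : F ∈ minimalAbove S G) : F ≠ ⊤ := by
  rintro rfl
  refine hGtop (hG.trans ((Finset.inf_eq_top_iff _ _).2 fun F' hF' => ?_))
  obtain ⟨hF'S, hGF', -⟩ := mem_minimalAbove.1 hF'
  exact (mem_minimalAbove.1 hF).2.2 F' hF'S hGF' le_top

end Minimal

section QMem

variable {M N : Type*} [AddCommGroup M] [Module ℂ M] [AddCommGroup N] [Module ℂ N]
  {𝒜 : Finset (Submodule ℂ M)}

theorem QMem.inf {E F : Submodule ℂ M} (hE : QMem 𝒜 E) (hF : QMem 𝒜 F) : QMem 𝒜 (E ⊓ F) := by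
  obtain ⟨T, hT, hTne, rfl⟩ := hE
  obtain ⟨T', hT', -, rfl⟩ := hF
  exact ⟨T ∪ T', Finset.union_subset hT hT', hTne.mono Finset.subset_union_left,
    Finset.inf_union.symm⟩

theorem QMem.exists_of_image {f : Submodule ℂ M → Submodule ℂ N} {X : Submodule ℂ N}
    (h : QMem (𝒜.image f) X) : ∃ T ⊆ 𝒜, T.Nonempty ∧ X = (T.image f).inf id := by
  obtain ⟨T', hT', hne, rfl⟩ := h
  obtain ⟨T, hT, rfl⟩ := Finset.subset_image_iff.1 hT'
  exact ⟨T, hT, Finset.image_nonempty.1 hne, rfl⟩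

theorem isBuildingSet_iff [FiniteDimensional ℂ M] {S : Finset (Submodule ℂ M)} :
    IsBuildingSet 𝒜 S ↔ ∀ E, QMem 𝒜 E →
      E = (minimalAbove S E).inf id ∧
      finrank ℂ M - finrank ℂ E = ∑ F ∈ minimalAbove S E, (finrank ℂ M - finrank ℂ F) ∧
      ∀ H ∈ 𝒜, E ≤ H → ∃ F ∈ minimalAbove S E, F ≤ H :=
  Iff.rfl

end QMem

variable {V : Type} [NormedAddCommGroup V] [InnerProductSpace ℂ V] [FiniteDimensional ℂ V]
  {𝒜 S : Finset (Submodule ℂ V)} {E G : Submodule ℂ V}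

section Normal

theorem minimalAbove_normal (hEG : E ≤ G) (hGtop : G ≠ ⊤)
    (hG : G = (minimalAbove S G).inf id) :
    minimalAbove ((S.filter (fun B => E ≤ B ∧ ¬ Eᗮ ≤ B)).image (comap Eᗮ.subtype))
        (comap Eᗮ.subtype G) = (minimalAbove S G).image (comap Eᗮ.subtype) := by
  have hEF : ∀ F ∈ minimalAbove S G, E ≤ F := fun F hF => hEG.trans (mem_minimalAbove.1 hF).2.1
  have hP : ∀ F ∈ minimalAbove S G, E ≤ F ∧ ¬ Eᗮ ≤ F := fun F hF =>
    ⟨hEF F hF, fun hEF' => ne_top_of_mem_minimalAbove hG hGtop hF <| top_unique <|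
      (sup_orthogonal_of_hasOrthogonalProjection (K := E)).ge.trans (sup_le (hEF F hF) hEF')⟩
  rw [minimalAbove_image_filter (P := fun B => E ≤ B ∧ ¬ Eᗮ ≤ B) (fun _ _ => comap_mono)
    (fun B _ hB => comap_orthogonal_subtype_le_iff hEG hB.1) (fun _ _ _ F hF _ => hP F hF),
    Finset.filter_true_of_mem hP]
  intro F hF _ F' hF' _ hle
  exact (mem_minimalAbove.1 hF).2.2 F' (mem_minimalAbove.1 hF').1 (mem_minimalAbove.1 hF').2.1
    ((comap_orthogonal_subtype_le_iff (hEF F' hF') (hEF F hF)).1 hle)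

theorem isBuildingSet_normal (h𝒜 : ∀ H ∈ 𝒜, H ≠ ⊤) (hbuild : IsBuildingSet 𝒜 S) :
    IsBuildingSet ((𝒜.filter (fun H => E ≤ H)).image (comap Eᗮ.subtype))
      ((S.filter (fun B => E ≤ B ∧ ¬ Eᗮ ≤ B)).image (comap Eᗮ.subtype)) := by
  rw [isBuildingSet_iff] at hbuild ⊢
  intro E'' hE''
  obtain ⟨T, hT, ⟨H₀, hH₀⟩, rfl⟩ := hE''.exists_of_image
  rw [finset_inf_image_comap]
  have hEG : E ≤ T.inf id := Finset.le_inf fun H hH => (Finset.mem_filter.1 (hT hH)).2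
  have hGtop : T.inf id ≠ ⊤ := fun h =>
    h𝒜 H₀ (Finset.mem_filter.1 (hT hH₀)).1 (top_unique (h ▸ Finset.inf_le hH₀))
  obtain ⟨hG₁, hG₂, hG₃⟩ :=
    hbuild (T.inf id) ⟨T, hT.trans (Finset.filter_subset _ _), ⟨H₀, hH₀⟩, rfl⟩
  have hEF : ∀ F ∈ minimalAbove S (T.inf id), E ≤ F :=
    fun F hF => hEG.trans (mem_minimalAbove.1 hF).2.1
  rw [minimalAbove_normal hEG hGtop hG₁]
  refine ⟨?_, ?_, ?_⟩
  · rw [finset_inf_image_comap, ← hG₁]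
  · rw [Finset.sum_image fun F hF F' hF' h => le_antisymm
      ((comap_orthogonal_subtype_le_iff (hEF F hF) (hEF F' hF')).1 h.le)
      ((comap_orthogonal_subtype_le_iff (hEF F' hF') (hEF F hF)).1 h.ge),
      finrank_orthogonal_sub_finrank_comap hEG, hG₂]
    exact Finset.sum_congr rfl fun F hF => (finrank_orthogonal_sub_finrank_comap (hEF F hF)).symm
  · intro H'' hH'' hle
    obtain ⟨H, hH, rfl⟩ := Finset.mem_image.1 hH''
    obtain ⟨hH𝒜, hEH⟩ := Finset.mem_filter.1 hH
    obtain ⟨F, hF, hFH⟩ := hG₃ H hH𝒜 ((comap_orthogonal_subtype_le_iff hEG hEH).1 hle)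
    exact ⟨_, Finset.mem_image_of_mem _ hF, comap_mono hFH⟩

end Normal

section Restrict

theorem supIndep_orthogonal_minimalAbove (hbuild : IsBuildingSet 𝒜 S) (hG : QMem 𝒜 G) :
    (minimalAbove S G).SupIndep (·ᗮ) := by
  obtain ⟨hG₁, hG₂, -⟩ := isBuildingSet_iff.1 hbuild G hG
  rw [← finrank_finset_sup_eq_sum_iff, ← orthogonal_finset_inf, ← hG₁,
    finrank_orthogonal_eq_sub, hG₂]
  exact Finset.sum_congr rfl fun F _ => (finrank_orthogonal_eq_sub F).symm

theorem orthogonal_eq_finset_sup_inf_orthogonal (hbuild : IsBuildingSet 𝒜 S) (hG : QMem 𝒜 G)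
    (hE : QMem 𝒜 E) (hGE : G ≤ E) : Eᗮ = (minimalAbove S G).sup fun F => Eᗮ ⊓ Fᗮ := by
  obtain ⟨-, -, hG₃⟩ := isBuildingSet_iff.1 hbuild G hG
  refine le_antisymm ?_ (Finset.sup_le fun F _ => inf_le_left)
  obtain ⟨T, hT, -, rfl⟩ := hE
  calc (T.inf id)ᗮ = T.sup (·ᗮ) := orthogonal_finset_inf T
    _ ≤ _ := Finset.sup_le fun H hH => by
      have hEH : T.inf id ≤ H := Finset.inf_le hH
      obtain ⟨F, hF, hFH⟩ := hG₃ H (hT hH) (hGE.trans hEH)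
      exact (le_inf (orthogonal_le hEH) (orthogonal_le hFH)).trans
        (Finset.le_sup (f := fun F => (T.inf id)ᗮ ⊓ Fᗮ) hF)

theorem eq_of_inf_le_inf_of_mem_minimalAbove (hbuild : IsBuildingSet 𝒜 S) (hG : QMem 𝒜 G)
    (hE : QMem 𝒜 E) (hGE : G ≤ E) {F F' : Submodule ℂ V} (hF : F ∈ minimalAbove S G)
    (hEF : ¬ E ≤ F) (hF' : F' ∈ minimalAbove S G) (hle : E ⊓ F' ≤ E ⊓ F) : F' = F := by
  by_contra hne
  -- `Y` enlarges the `F'`-summand of `E^⊥ = ⊕ (E^⊥ ⊓ F''^⊥)` to all of `F'^⊥`; independence of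
  -- the `F''^⊥` then confines `F^⊥ ≤ E^⊥ ⊔ F'^⊥` to its own summand `E^⊥ ⊓ F^⊥`.
  let Y := Function.update (fun F => Eᗮ ⊓ Fᗮ) F' F'ᗮ
  have hY : ∀ F'', Eᗮ ⊓ F''ᗮ ≤ Y F'' ∧ Y F'' ≤ F''ᗮ := fun F'' => by
    by_cases h : F'' = F'
    · subst h; simp [Y]
    · simp [Y, h]
  have hEY : Eᗮ ≤ (minimalAbove S G).sup Y := by
    rw [orthogonal_eq_finset_sup_inf_orthogonal hbuild hG hE hGE]
    exact Finset.sup_mono_fun fun F'' _ => (hY F'').1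
  have hFY : Fᗮ ≤ (minimalAbove S G).sup Y := calc
    Fᗮ ≤ (E ⊓ F')ᗮ := orthogonal_le (hle.trans inf_le_right)
    _ = Eᗮ ⊔ F'ᗮ := orthogonal_inf E F'
    _ ≤ _ := sup_le hEY (by simpa [Y] using Finset.le_sup (f := Y) hF')
  have hFE := (supIndep_orthogonal_minimalAbove hbuild hG).le_of_le_sup
    (fun F'' _ => (hY F'').2) hF le_rfl hFY
  rw [show Y F = Eᗮ ⊓ Fᗮ from Function.update_of_ne (Ne.symm hne) _ _] at hFE
  exact hEF (orthogonal_le_orthogonal_iff.1 (hFE.trans inf_le_left))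

theorem finrank_sub_finrank_eq_sum_filter_minimalAbove (hbuild : IsBuildingSet 𝒜 S)
    (hG : QMem 𝒜 G) (hE : QMem 𝒜 E) (hGE : G ≤ E) :
    finrank ℂ E - finrank ℂ G =
      ∑ F ∈ (minimalAbove S G).filter (¬ E ≤ ·), (finrank ℂ E - finrank ℂ ↥(E ⊓ F)) := by
  obtain ⟨hG₁, -, -⟩ := isBuildingSet_iff.1 hbuild G hG
  have hindep := supIndep_orthogonal_minimalAbove hbuild hG
  have hsumG : finrank ℂ Gᗮ = ∑ F ∈ minimalAbove S G, finrank ℂ Fᗮ := by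
    have hGorth : Gᗮ = (minimalAbove S G).sup (·ᗮ) := by rw [← orthogonal_finset_inf, ← hG₁]
    rw [hGorth]
    exact finrank_finset_sup_eq_sum_iff.2 hindep
  have hsumE : finrank ℂ Eᗮ = ∑ F ∈ minimalAbove S G, finrank ℂ ↥(Eᗮ ⊓ Fᗮ) := by
    conv_lhs => rw [orthogonal_eq_finset_sup_inf_orthogonal hbuild hG hE hGE]
    exact finrank_finset_sup_eq_sum_iff.2 (hindep.mono fun _ _ => inf_le_right)
  calc finrank ℂ E - finrank ℂ G = finrank ℂ Gᗮ - finrank ℂ Eᗮ := by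
        have := finrank_mono hGE
        have := finrank_le E
        rw [finrank_orthogonal_eq_sub, finrank_orthogonal_eq_sub]
        omega
    _ = ∑ F ∈ minimalAbove S G, (finrank ℂ Fᗮ - finrank ℂ ↥(Eᗮ ⊓ Fᗮ)) := by
        rw [hsumG, hsumE, Finset.sum_tsub_distrib]
        exact fun F _ => finrank_mono inf_le_right
    _ = ∑ F ∈ minimalAbove S G, (finrank ℂ E - finrank ℂ ↥(E ⊓ F)) :=
        Finset.sum_congr rfl fun F _ => (finrank_sub_finrank_inf_eq_orthogonal E F).symm
    _ = _ := (Finset.sum_filter_of_ne (p := (¬ E ≤ ·)) fun F _ h hEF =>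
        h (by rw [inf_eq_left.2 hEF, Nat.sub_self])).symm

theorem minimalAbove_restrict (hbuild : IsBuildingSet 𝒜 S) (hG : QMem 𝒜 G) (hE : QMem 𝒜 E)
    (hGE : G ≤ E) :
    minimalAbove ((S.filter (¬ E ≤ ·)).image (comap E.subtype)) (comap E.subtype G) =
      ((minimalAbove S G).filter (¬ E ≤ ·)).image (comap E.subtype) :=
  minimalAbove_image_filter (fun _ _ => comap_mono)
    (fun _ _ _ => comap_subtype_le_comap_subtype_iff_of_le hGE)
    (fun _ _ hB _ _ hFB hEF => hB (hEF.trans hFB))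
    (fun _ hF hEF _ hF' _ hle =>
      eq_of_inf_le_inf_of_mem_minimalAbove hbuild hG hE hGE hF hEF hF' (comap_subtype_le_iff.1 hle))

theorem isBuildingSet_restrict (hbuild : IsBuildingSet 𝒜 S) (hE : QMem 𝒜 E) :
    IsBuildingSet ((𝒜.filter (fun H => ¬ E ≤ H)).image (comap E.subtype))
      ((S.filter (fun B => ¬ E ≤ B)).image (comap E.subtype)) := by
  rw [isBuildingSet_iff]
  intro E' hE'
  obtain ⟨T, hT, hTne, rfl⟩ := hE'.exists_of_image
  have hGE : E ⊓ T.inf id ≤ E := inf_le_left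
  have hG : QMem 𝒜 (E ⊓ T.inf id) := hE.inf ⟨T, hT.trans (Finset.filter_subset _ _), hTne, rfl⟩
  obtain ⟨hG₁, -, hG₃⟩ := isBuildingSet_iff.1 hbuild _ hG
  have hcomap : ∀ X : Submodule ℂ V, comap E.subtype (E ⊓ X) = comap E.subtype X := fun X => by
    rw [comap_inf, comap_subtype_self, top_inf_eq]
  rw [finset_inf_image_comap, ← hcomap, minimalAbove_restrict hbuild hG hE hGE]
  refine ⟨?_, ?_, ?_⟩
  · rw [finset_inf_image_comap, ← hcomap (Finset.inf _ id), ← Finset.inf_inf_filter_not_le, ← hG₁,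
      inf_left_idem]
  · rw [Finset.sum_image fun F hF F' hF' h =>
      (eq_of_inf_le_inf_of_mem_minimalAbove hbuild hG hE hGE (Finset.mem_filter.1 hF').1
        (Finset.mem_filter.1 hF').2 (Finset.mem_filter.1 hF).1 (comap_subtype_le_iff.1 h.le)),
      finrank_comap_subtype, inf_eq_right.2 hGE,
      finrank_sub_finrank_eq_sum_filter_minimalAbove hbuild hG hE hGE]
    exact Finset.sum_congr rfl fun F _ => by rw [finrank_comap_subtype]
  · intro H' hH' hle
    obtain ⟨H, hH, rfl⟩ := Finset.mem_image.1 hH'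
    obtain ⟨hH𝒜, hEH⟩ := Finset.mem_filter.1 hH
    obtain ⟨F, hF, hFH⟩ := hG₃ H hH𝒜 ((comap_subtype_le_comap_subtype_iff_of_le hGE).1 hle)
    exact ⟨_, Finset.mem_image_of_mem _ (Finset.mem_filter.2 ⟨hF, fun hEF => hEH (hEF.trans hFH)⟩),
      comap_mono hFH⟩

end Restrict

end CxArr

open CxArr in
theorem statement_7_general {V : Type} [NormedAddCommGroup V] [InnerProductSpace ℂ V]
    [FiniteDimensional ℂ V] (𝒜 S : Finset (Submodule ℂ V))
    (hhyp : ∀ H ∈ 𝒜, IsCoatom H)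
    (hbuild : IsBuildingSet 𝒜 S)
    (E : Submodule ℂ V) (hE : QMem 𝒜 E) :
    IsBuildingSet ((𝒜.filter (fun H => ¬ E ≤ H)).image (Submodule.comap E.subtype))
      ((S.filter (fun B => ¬ E ≤ B)).image (Submodule.comap E.subtype)) ∧
    IsBuildingSet ((𝒜.filter (fun H => E ≤ H)).image (Submodule.comap (Eᗮ).subtype))
      ((S.filter (fun B => E ≤ B ∧ ¬ Eᗮ ≤ B)).image (Submodule.comap (Eᗮ).subtype)) :=
  ⟨isBuildingSet_restrict hbuild hE,
    isBuildingSet_normal (fun H hH => (hhyp H hH).ne_top) hbuild⟩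

open CxArr in
/-- If `S` is a building set for a central essential arrangement `𝒜` with
`Q(S) = Q(𝒜)`, then for every `E ∈ Q(𝒜)`:
(1) `S^E = {B ∩ E : B ∈ S ∖ S_E}` is a building set for the restriction
    `𝒜^E = {H ∩ E : H ∈ 𝒜, E ⊄ H}` (an arrangement in `E`), and
(2) `S^{E^⊥}_E = {B ∩ E^⊥ : B ∈ S_E ∖ (S_E ∩ S_{E^⊥})}` is a building set for the normal
    arrangement `𝒜_{V/E} = {H ∩ E^⊥ : H ∈ 𝒜, E ⊆ H}` (identifying `V/E` with `E^⊥`). -/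
theorem statement_7 {V : Type} [NormedAddCommGroup V] [InnerProductSpace ℂ V]
    [FiniteDimensional ℂ V] (𝒜 S : Finset (Submodule ℂ V))
    (hhyp : ∀ H ∈ 𝒜, IsCoatom H) (hess : 𝒜.inf id = ⊥)
    (hQSQ : {E : Submodule ℂ V | ∃ T : Finset (Submodule ℂ V), T ⊆ S ∧ T.Nonempty ∧ E = T.inf id}
      = {E : Submodule ℂ V | QMem 𝒜 E})
    (hbuild : IsBuildingSet 𝒜 S)
    (E : Submodule ℂ V) (hE : QMem 𝒜 E) :
    IsBuildingSet ((𝒜.filter (fun H => ¬ E ≤ H)).image (Submodule.comap E.subtype))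
      ((S.filter (fun B => ¬ E ≤ B)).image (Submodule.comap E.subtype)) ∧
    IsBuildingSet ((𝒜.filter (fun H => E ≤ H)).image (Submodule.comap (Eᗮ).subtype))
      ((S.filter (fun B => E ≤ B ∧ ¬ Eᗮ ≤ B)).image (Submodule.comap (Eᗮ).subtype)) :=
  statement_7_general 𝒜 S hhyp hbuild E hE
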